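/- Let F1, F2, F3, F4 be finite fields with |F_i \ {0}| = n_i for i = 1, 2, 3, 4, where n1 ≥ n2 ≥ n3 ≥ n4. If R = F1 × F2 × F3 × F4, then α(Γ(R)) = n1·(n2n3 + n2n4 + n3n4 + n2 + n3) + max{n1 + n1n4, n2n3 + n2n3n4, n1n4 + n2n3n4}. -/

import Mathlib

/-- The zero-divisor graph `Γ(R)`: vertices are the nonzero zero-divisors of `R`,
with distinct vertices `x`, `y` adjacent iff `x * y = 0`. -/
def zdvGraph (R : Type*) [CommRing R] :
    SimpleGraph {x : R // x ≠ 0 ∧ ∃ y ≠ 0, x * y = 0} where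
  Adj x y := x ≠ y ∧ (x : R) * y = 0
  symm := ⟨fun x y ⟨hxy, h⟩ => ⟨hxy.symm, by rwa [mul_comm]⟩⟩
  loopless := ⟨fun x ⟨h, _⟩ => h rfl⟩

/-- The independence number of a simple graph: the maximum cardinality of a set of
pairwise non-adjacent vertices. -/
noncomputable def indepNum {V : Type*} (G : SimpleGraph V) : ℕ :=
  sSup {n | ∃ s : Finset V, (s : Set V).Pairwise (fun a b => ¬ G.Adj a b) ∧ s.card = n}

/-!
In a product of domains `x * y = 0` exactly when the supports of `x` and `y` are disjoint, and a
nonzero `x` is a zero-divisor exactly when its support is proper. Hence the fibres of the support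
map over an intersecting family `Q` of proper supports form an independent set of `Γ(R)`, and
every independent set lies in such a union, so `α(Γ(R))` is the largest weight
`∑_{S ∈ Q} ∏_{i ∈ S} nᵢ` of such a family. For four factors, an intersecting family of proper
subsets of `{1, 2, 3, 4}` containing a singleton `{i}` lies in the star of `i`; one without
singletons consists of three-element sets and at most one set from each complementary pair of
two-element sets. Under `n₁ ≥ n₂ ≥ n₃ ≥ n₄` the star of `1` and the best choice of two-element sets
give the three terms of the maximum.
-/

open Finset

local notation "Z*(" R ")" => {x : R // x ≠ 0 ∧ ∃ y ≠ 0, x * y = 0}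

theorem card_filter_mem_eq_sum_natCard {α β : Type*} [Fintype α] [DecidableEq β] (f : α → β)
    (t : Finset β) : #{a | f a ∈ t} = ∑ b ∈ t, Nat.card {a // f a = b} := by
  rw [← sum_card_fiberwise_eq_card_filter]
  exact sum_congr rfl fun b _ => by rw [Nat.card_eq_fintype_card, Fintype.card_subtype]

theorem indepNum_eq_simpleGraph_indepNum {V : Type*} (G : SimpleGraph V) :
    indepNum G = G.indepNum := by
  simp only [indepNum, SimpleGraph.indepNum, SimpleGraph.isNIndepSet_iff]

structure IsSupportMap {R P : Type*} [CommRing R] [BooleanAlgebra P] (σ : R → P) : Prop where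
  surjective : Function.Surjective σ
  map_one : σ 1 = ⊤
  mul_eq_zero_iff (x y : R) : x * y = 0 ↔ Disjoint (σ x) (σ y)

namespace IsSupportMap

variable {R P : Type*} [CommRing R] [BooleanAlgebra P] {σ : R → P}

theorem eq_zero_iff (hσ : IsSupportMap σ) {x : R} : x = 0 ↔ σ x = ⊥ := by
  rw [← disjoint_top, ← hσ.map_one, ← hσ.mul_eq_zero_iff, mul_one]

theorem ne_zero_and_exists_mul_eq_zero_iff (hσ : IsSupportMap σ) {x : R} :
    (x ≠ 0 ∧ ∃ y ≠ 0, x * y = 0) ↔ σ x ≠ ⊥ ∧ σ x ≠ ⊤ := by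
  refine and_congr (not_congr hσ.eq_zero_iff) ⟨?_, fun hx => ?_⟩
  · rintro ⟨y, hy, hxy⟩ hx
    rw [hσ.mul_eq_zero_iff, hx, top_disjoint, ← hσ.eq_zero_iff] at hxy
    exact hy hxy
  · obtain ⟨y, hy⟩ := hσ.surjective (σ x)ᶜ
    refine ⟨y, ?_, ?_⟩
    · rwa [Ne, hσ.eq_zero_iff, hy, compl_eq_bot]
    · rw [hσ.mul_eq_zero_iff, hy]
      exact disjoint_compl_right

theorem zdvGraph_adj_iff (hσ : IsSupportMap σ) {v w : Z*(R)} :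
    (zdvGraph R).Adj v w ↔ v ≠ w ∧ Disjoint (σ v) (σ w) :=
  and_congr_right fun _ => hσ.mul_eq_zero_iff v w

theorem prodMap {S P' : Type*} [CommRing S] [BooleanAlgebra P'] {τ : S → P'}
    (hσ : IsSupportMap σ) (hτ : IsSupportMap τ) : IsSupportMap (Prod.map σ τ) where
  surjective := hσ.surjective.prodMap hτ.surjective
  map_one := Prod.ext hσ.map_one hτ.map_one
  mul_eq_zero_iff x y := by
    rw [Prod.ext_iff, Prod.disjoint_iff]
    exact and_congr (hσ.mul_eq_zero_iff x.1 y.1) (hτ.mul_eq_zero_iff x.2 y.2)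

theorem map_subtype_filter_mem [Fintype R] [DecidableEq R] [DecidableEq P] (hσ : IsSupportMap σ)
    {Q : Finset P} (hbot : ⊥ ∉ Q) (htop : ⊤ ∉ Q) :
    ({v | σ v ∈ Q} : Finset Z*(R)).map (Function.Embedding.subtype _) =
      ({x | σ x ∈ Q} : Finset R) := by
  ext x
  simp only [mem_map, mem_filter, mem_univ, true_and, Function.Embedding.subtype_apply]
  refine ⟨fun ⟨v, hv, hvx⟩ => hvx ▸ hv, fun hx => ⟨⟨x, ?_⟩, hx, rfl⟩⟩
  exact hσ.ne_zero_and_exists_mul_eq_zero_iff.2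
    ⟨ne_of_mem_of_not_mem hx hbot, ne_of_mem_of_not_mem hx htop⟩

variable [Finite R]

theorem indepNum_zdvGraph_le (hσ : IsSupportMap σ) {B : ℕ}
    (h : ∀ Q : Finset P, (Q : Set P).Intersecting → ⊤ ∉ Q →
      ∑ p ∈ Q, Nat.card {x // σ x = p} ≤ B) :
    indepNum (zdvGraph R) ≤ B := by
  classical
  have := Fintype.ofFinite R
  obtain ⟨s, hs, hcard⟩ := (zdvGraph R).exists_isNIndepSet_indepNum
  set Q := s.image (σ ∘ Subtype.val)
  have hQ : (Q : Set P).Intersecting := by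
    intro p hp q hq hpq
    obtain ⟨v, hv, rfl⟩ := mem_image.1 hp
    obtain ⟨w, hw, rfl⟩ := mem_image.1 hq
    by_cases hvw : v = w
    · subst hvw
      exact (hσ.ne_zero_and_exists_mul_eq_zero_iff.1 v.2).1 (disjoint_self.1 hpq)
    · exact hs hv hw hvw (hσ.zdvGraph_adj_iff.2 ⟨hvw, hpq⟩)
  have htop : ⊤ ∉ Q := by
    simp only [Q, mem_image, not_exists, not_and]
    exact fun v _ => (hσ.ne_zero_and_exists_mul_eq_zero_iff.1 v.2).2
  have hsub : s ⊆ ({v | σ v ∈ Q} : Finset Z*(R)) :=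
    fun v hv => mem_filter.2 ⟨mem_univ v, mem_image_of_mem _ hv⟩
  rw [indepNum_eq_simpleGraph_indepNum, ← hcard]
  refine (card_le_card hsub).trans ?_
  rw [← card_map, hσ.map_subtype_filter_mem hQ.bot_notMem htop, card_filter_mem_eq_sum_natCard]
  exact h Q hQ htop

theorem le_indepNum_zdvGraph (hσ : IsSupportMap σ) {Q : Finset P} (hQ : (Q : Set P).Intersecting)
    (htop : ⊤ ∉ Q) : ∑ p ∈ Q, Nat.card {x // σ x = p} ≤ indepNum (zdvGraph R) := by
  classical
  have := Fintype.ofFinite R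
  rw [← card_filter_mem_eq_sum_natCard, ← hσ.map_subtype_filter_mem hQ.bot_notMem htop, card_map,
    indepNum_eq_simpleGraph_indepNum]
  refine SimpleGraph.IsIndepSet.card_le_indepNum fun v hv w hw _ hadj => ?_
  simp only [coe_filter, mem_univ, true_and, Set.mem_ofPred_eq] at hv hw
  exact hQ hv hw (hσ.zdvGraph_adj_iff.1 hadj).2

end IsSupportMap

theorem isSupportMap_decide_ne_zero (K : Type*) [CommRing K] [IsDomain K] [DecidableEq K] :
    IsSupportMap fun a : K => decide (a ≠ 0) where
  surjective b := ⟨cond b 1 0, by cases b <;> simp⟩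
  map_one := by simp
  mul_eq_zero_iff x y := by
    by_cases hx : x = 0 <;> by_cases hy : y = 0 <;> simp [hx, hy, disjoint_iff]

theorem natCard_fiber_prodMap {α β γ δ : Type*} (f : α → γ) (g : β → δ) (c : γ) (d : δ) :
    Nat.card {x // Prod.map f g x = (c, d)} =
      Nat.card {a // f a = c} * Nat.card {b // g b = d} := by
  rw [← Nat.card_prod]
  exact Nat.card_congr ((Equiv.subtypeEquivRight (q := fun x => f x.1 = c ∧ g x.2 = d)
    fun _ => Prod.ext_iff).trans
    (Equiv.subtypeProdEquivProd (p := fun a => f a = c) (q := fun b => g b = d)))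

theorem natCard_fiber_decide_ne_zero (K : Type*) [Zero K] [DecidableEq K] (b : Bool) :
    Nat.card {a : K // decide (a ≠ 0) = b} = cond b (Nat.card {a : K // a ≠ 0}) 1 := by
  cases b <;> simp

/-- Support patterns in `F₁ × F₂ × F₃ × F₄`: the `i`-th entry records whether the `i`-th
component is nonzero. -/
abbrev Pattern := Bool × Bool × Bool × Bool

-- The number of elements of `F₁ × F₂ × F₃ × F₄` with support pattern `p`, where `nᵢ = |Fᵢ ˣ|`.
def patternWeight (n₁ n₂ n₃ n₄ : ℕ) (p : Pattern) : ℕ :=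
  cond p.1 n₁ 1 * (cond p.2.1 n₂ 1 * (cond p.2.2.1 n₃ 1 * cond p.2.2.2 n₄ 1))

def patternAtoms : Finset Pattern :=
  {(true, false, false, false), (false, true, false, false), (false, false, true, false),
    (false, false, false, true)}

def upStar (e : Pattern) : Finset Pattern := {p | e ≤ p ∧ p ≠ ⊤}

-- All three-element patterns, and one pattern from each complementary pair of two-element ones.
def pairFamily (a b c : Bool) : Finset Pattern :=
  {(a, a, !a, !a), (b, !b, b, !b), (c, !c, !c, c), (true, true, true, false),
    (true, true, false, true), (true, false, true, true), (false, true, true, true)}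

theorem isAtom_of_mem_patternAtoms {e : Pattern} (he : e ∈ patternAtoms) : IsAtom e := by
  simp only [patternAtoms, mem_insert, mem_singleton] at he
  rcases he with rfl | rfl | rfl | rfl <;> rw [isAtom_iff_le_of_ge] <;> decide

theorem insert_union_patternAtoms_union_pairFamily (a b c : Bool) :
    {⊥, ⊤, (!a, !a, a, a), (!b, b, !b, b), (!c, c, c, !c)} ∪ patternAtoms ∪ pairFamily a b c =
      univ := by
  cases a <;> cases b <;> cases c <;> decide

theorem intersecting_upStar {e : Pattern} (he : e ≠ ⊥) :
    (upStar e : Set Pattern).Intersecting := by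
  intro p hp q hq hpq
  simp only [upStar, coe_filter, mem_univ, true_and, Set.mem_ofPred_eq] at hp hq
  exact he (disjoint_self.1 (hpq.mono hp.1 hq.1))

theorem top_notMem_upStar (e : Pattern) : ⊤ ∉ upStar e := by
  simp [upStar]

theorem intersecting_pairFamily (a b c : Bool) :
    (pairFamily a b c : Set Pattern).Intersecting := by
  intro p hp q hq
  rw [disjoint_iff]
  revert p q
  cases a <;> cases b <;> cases c <;> decide

theorem top_notMem_pairFamily (a b c : Bool) : ⊤ ∉ pairFamily a b c := by
  cases a <;> cases b <;> cases c <;> decide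

theorem Set.Intersecting.exists_notMem {P : Type*} [BooleanAlgebra P] {s : Set P}
    (hs : s.Intersecting) (f : Bool → P) (hf : f true = (f false)ᶜ) : ∃ a, f a ∉ s := by
  by_cases h : f false ∈ s
  · exact ⟨true, hf ▸ hs.compl_notMem h⟩
  · exact ⟨false, h⟩

theorem exists_subset_pairFamily {Q : Finset Pattern} (hQ : (Q : Set Pattern).Intersecting)
    (htop : ⊤ ∉ Q) (hatoms : ∀ e ∈ patternAtoms, e ∉ Q) : ∃ a b c, Q ⊆ pairFamily a b c := by
  obtain ⟨a, ha⟩ := hQ.exists_notMem (fun a => (!a, !a, a, a)) rfl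
  obtain ⟨b, hb⟩ := hQ.exists_notMem (fun b => (!b, b, !b, b)) rfl
  obtain ⟨c, hc⟩ := hQ.exists_notMem (fun c => (!c, c, c, !c)) rfl
  refine ⟨a, b, c, fun p hp => ?_⟩
  have hp' := insert_union_patternAtoms_union_pairFamily a b c ▸ mem_univ p
  simp only [mem_union, mem_insert, mem_singleton] at hp'
  rcases hp' with ((rfl | rfl | rfl | rfl | rfl) | hpa) | hpf
  · exact absurd hp hQ.bot_notMem
  · exact absurd hp htop
  · exact absurd hp ha
  · exact absurd hp hb
  · exact absurd hp hc
  · exact absurd hp (hatoms p hpa)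
  · exact hpf

section weights

variable {n₁ n₂ n₃ n₄ : ℕ}

theorem sum_upStar_eq :
    ∑ p ∈ upStar (true, false, false, false), patternWeight n₁ n₂ n₃ n₄ p =
      n₁ * (n₂ * n₃ + n₂ * n₄ + n₃ * n₄ + n₂ + n₃) + (n₁ + n₁ * n₄) := by
  simp +decide only [upStar, sum_filter, Fintype.sum_prod_type, Fintype.sum_bool, patternWeight,
    cond_true, cond_false, ↓reduceIte, mul_one, one_mul, add_zero, zero_add]
  ring

theorem sum_upStar_le (h12 : n₂ ≤ n₁) (h23 : n₃ ≤ n₂) (h34 : n₄ ≤ n₃) {e : Pattern}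
    (he : e ∈ patternAtoms) :
    ∑ p ∈ upStar e, patternWeight n₁ n₂ n₃ n₄ p ≤
      n₁ * (n₂ * n₃ + n₂ * n₄ + n₃ * n₄ + n₂ + n₃) + (n₁ + n₁ * n₄) := by
  have h31 := h23.trans h12
  have h41 := h34.trans h31
  simp only [patternAtoms, mem_insert, mem_singleton] at he
  rcases he with rfl | rfl | rfl | rfl
  · exact sum_upStar_eq.le
  all_goals simp +decide only [upStar, sum_filter, Fintype.sum_prod_type, Fintype.sum_bool,
    patternWeight, cond_true, cond_false, ↓reduceIte, mul_one, one_mul, add_zero, zero_add]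
  · linarith [Nat.mul_le_mul_right n₃ h12, Nat.mul_le_mul_right n₄ h12,
      Nat.mul_le_mul_right (n₃ * n₄) h12]
  · linarith [Nat.mul_le_mul_right n₂ h31, Nat.mul_le_mul_right n₄ h31,
      Nat.mul_le_mul_right (n₂ * n₄) h31]
  · linarith [Nat.mul_le_mul_right n₂ h41, Nat.mul_le_mul_right n₃ h41,
      Nat.mul_le_mul_right (n₂ * n₃) h41]

theorem sum_pairFamily (a b c : Bool) :
    ∑ p ∈ pairFamily a b c, patternWeight n₁ n₂ n₃ n₄ p =
      n₁ * n₂ * n₃ + n₁ * n₂ * n₄ + n₁ * n₃ * n₄ + n₂ * n₃ * n₄ + cond a (n₁ * n₂) (n₃ * n₄) +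
        cond b (n₁ * n₃) (n₂ * n₄) + cond c (n₁ * n₄) (n₂ * n₃) := by
  cases a <;> cases b <;> cases c <;>
    simp +decide [pairFamily, patternWeight, sum_insert] <;> ring

theorem sum_pairFamily_le (h12 : n₂ ≤ n₁) (h23 : n₃ ≤ n₂) (h34 : n₄ ≤ n₃) (a b c : Bool) :
    ∑ p ∈ pairFamily a b c, patternWeight n₁ n₂ n₃ n₄ p ≤
      n₁ * (n₂ * n₃ + n₂ * n₄ + n₃ * n₄ + n₂ + n₃) +
        max (n₂ * n₃ + n₂ * n₃ * n₄) (n₁ * n₄ + n₂ * n₃ * n₄) := by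
  have ha : cond a (n₁ * n₂) (n₃ * n₄) ≤ n₁ * n₂ := by
    cases a
    · exact Nat.mul_le_mul (h23.trans h12) (h34.trans h23)
    · exact le_rfl
  have hb : cond b (n₁ * n₃) (n₂ * n₄) ≤ n₁ * n₃ := by
    cases b
    · exact Nat.mul_le_mul h12 h34
    · exact le_rfl
  have hc : cond c (n₁ * n₄) (n₂ * n₃) ≤ max (n₂ * n₃) (n₁ * n₄) := by
    cases c
    · exact le_max_left _ _
    · exact le_max_right _ _
  rw [sum_pairFamily, max_add_add_right]
  linarith

theorem sum_patternWeight_le (h12 : n₂ ≤ n₁) (h23 : n₃ ≤ n₂) (h34 : n₄ ≤ n₃)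
    {Q : Finset Pattern} (hQ : (Q : Set Pattern).Intersecting) (htop : ⊤ ∉ Q) :
    ∑ p ∈ Q, patternWeight n₁ n₂ n₃ n₄ p ≤
      n₁ * (n₂ * n₃ + n₂ * n₄ + n₃ * n₄ + n₂ + n₃) +
        max (n₁ + n₁ * n₄) (max (n₂ * n₃ + n₂ * n₃ * n₄) (n₁ * n₄ + n₂ * n₃ * n₄)) := by
  by_cases hatom : ∃ e ∈ patternAtoms, e ∈ Q
  · obtain ⟨e, he, heQ⟩ := hatom
    have hsub : Q ⊆ upStar e := fun p hp => mem_filter.2 ⟨mem_univ p,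
      (isAtom_of_mem_patternAtoms he).not_disjoint_iff_le.1 (hQ heQ hp),
      ne_of_mem_of_not_mem hp htop⟩
    calc _ ≤ _ := sum_le_sum_of_subset hsub
      _ ≤ _ := sum_upStar_le h12 h23 h34 he
      _ ≤ _ := Nat.add_le_add_left (le_max_left _ _) _
  · push Not at hatom
    obtain ⟨a, b, c, hsub⟩ := exists_subset_pairFamily hQ htop hatom
    calc _ ≤ _ := sum_le_sum_of_subset hsub
      _ ≤ _ := sum_pairFamily_le h12 h23 h34 a b c
      _ ≤ _ := Nat.add_le_add_left (le_max_right _ _) _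

end weights

theorem exists_intersecting_sum_patternWeight_eq (n₁ n₂ n₃ n₄ : ℕ) :
    ∃ Q : Finset Pattern, (Q : Set Pattern).Intersecting ∧ ⊤ ∉ Q ∧
      ∑ p ∈ Q, patternWeight n₁ n₂ n₃ n₄ p =
        n₁ * (n₂ * n₃ + n₂ * n₄ + n₃ * n₄ + n₂ + n₃) +
          max (n₁ + n₁ * n₄) (max (n₂ * n₃ + n₂ * n₃ * n₄) (n₁ * n₄ + n₂ * n₃ * n₄)) := by
  rcases max_choice (n₁ + n₁ * n₄) (max (n₂ * n₃ + n₂ * n₃ * n₄) (n₁ * n₄ + n₂ * n₃ * n₄))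
    with h | h
  · refine ⟨_, intersecting_upStar (e := (true, false, false, false)) (by decide),
      top_notMem_upStar _, ?_⟩
    rw [h, sum_upStar_eq]
  rcases max_choice (n₂ * n₃ + n₂ * n₃ * n₄) (n₁ * n₄ + n₂ * n₃ * n₄) with h' | h'
  · refine ⟨_, intersecting_pairFamily true true false, top_notMem_pairFamily true true false,
      ?_⟩
    rw [h, h', sum_pairFamily, cond_true, cond_true, cond_false]
    ring
  · refine ⟨_, intersecting_pairFamily true true true, top_notMem_pairFamily true true true, ?_⟩
    rw [h, h', sum_pairFamily, cond_true, cond_true, cond_true]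
    ring

theorem stmt13 (F₁ F₂ F₃ F₄ : Type*) [Field F₁] [Field F₂] [Field F₃] [Field F₄]
    [Finite F₁] [Finite F₂] [Finite F₃] [Finite F₄] (n₁ n₂ n₃ n₄ : ℕ)
    (h₁ : Nat.card {x : F₁ // x ≠ 0} = n₁) (h₂ : Nat.card {x : F₂ // x ≠ 0} = n₂)
    (h₃ : Nat.card {x : F₃ // x ≠ 0} = n₃) (h₄ : Nat.card {x : F₄ // x ≠ 0} = n₄)
    (h12 : n₂ ≤ n₁) (h23 : n₃ ≤ n₂) (h34 : n₄ ≤ n₃)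
 :
    indepNum (zdvGraph (F₁ × F₂ × F₃ × F₄)) =
      n₁ * (n₂ * n₃ + n₂ * n₄ + n₃ * n₄ + n₂ + n₃) +
        max (n₁ + n₁ * n₄) (max (n₂ * n₃ + n₂ * n₃ * n₄) (n₁ * n₄ + n₂ * n₃ * n₄)) := by
  classical
  obtain ⟨σ, hσ, hfiber⟩ : ∃ σ : F₁ × F₂ × F₃ × F₄ → Pattern, IsSupportMap σ ∧
      ∀ p, Nat.card {x // σ x = p} = patternWeight n₁ n₂ n₃ n₄ p :=
    ⟨_, (isSupportMap_decide_ne_zero F₁).prodMap <| (isSupportMap_decide_ne_zero F₂).prodMap <|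
        (isSupportMap_decide_ne_zero F₃).prodMap (isSupportMap_decide_ne_zero F₄),
      fun ⟨a, b, c, d⟩ => by
        simp only [natCard_fiber_prodMap, natCard_fiber_decide_ne_zero, h₁, h₂, h₃, h₄]
        rfl⟩
  refine le_antisymm (hσ.indepNum_zdvGraph_le fun Q hQ htop => ?_) ?_
  · simpa only [hfiber] using sum_patternWeight_le h12 h23 h34 hQ htop
  · obtain ⟨Q, hQ, htop, hsum⟩ := exists_intersecting_sum_patternWeight_eq n₁ n₂ n₃ n₄
    simpa only [hfiber, hsum] using hσ.le_indepNum_zdvGraph hQ htop
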